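/- arXiv:1307.0473 — 2 statements merged into one kernel-verified Lean document; each statement's English description precedes it below -/
import Mathlib

section
/- For a finite set X, a probability measure μ on X with full support, and real-valued functions g, h on X, define the Gibbs distributions μ_g(x) = μ(x)exp(g(x))/⟨μ, exp(g)⟩ and μ_h similarly. Then the Kullback–Leibler divergence satisfies D(μ_g ‖ μ_h) ≤ ‖g − h‖_s² / 8, where ‖f‖_s = max_x f(x) − min_x f(x) is the span seminorm. -/
open Finset Real

/-- The Gibbs distribution induced by base measure `μ` and (negative energy) function `f`. -/
noncomputable def gibbs {X : Type*} [Fintype X] (μ : X → ℝ) (f : X → ℝ) : X → ℝ :=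
  fun x => μ x * Real.exp (f x) / ∑ y, μ y * Real.exp (f y)

/-- Kullback–Leibler divergence between distributions on a finite set. -/
noncomputable def klDiv {X : Type*} [Fintype X] (ν ρ : X → ℝ) : ℝ :=
  ∑ x, ν x * Real.log (ν x / ρ x)

/-- Span seminorm (oscillation) of a function on a finite set. -/
noncomputable def spanSeminorm {X : Type*} [Fintype X] (f : X → ℝ) : ℝ :=
  (⨆ x, f x) - ⨅ x, f x


/-! With `ν = gibbs μ g` and `f = h - g`, one has `D(μ_g ‖ μ_h) = log E_ν[e^f] - E_ν[f]`: the
cumulant generating function of the centred variable `f - E_ν[f]` at `1`. As `f` takes values in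
an interval of length `‖g - h‖_s`, Hoeffding's lemma bounds it by `‖g - h‖_s² / 8`. -/

open ProbabilityTheory MeasureTheory

/-- Hoeffding's lemma for a probability vector `ρ`. -/
theorem log_sum_mul_exp_le {X : Type*} [Fintype X] {ρ : X → ℝ} (hρ : ∀ x, 0 ≤ ρ x)
    (hρ1 : ∑ x, ρ x = 1) {f : X → ℝ} {a b : ℝ} (hf : ∀ x, f x ∈ Set.Icc a b) :
    log (∑ x, ρ x * exp (f x)) ≤ ∑ x, ρ x * f x + (b - a) ^ 2 / 8 := by
  let _ : MeasurableSpace X := ⊤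
  let p : PMF X := PMF.ofFintype (fun x => ENNReal.ofReal (ρ x)) <| by
    rw [← ENNReal.ofReal_sum_of_nonneg fun x _ => hρ x, hρ1, ENNReal.ofReal_one]
  have integral_eq (φ : X → ℝ) : ∫ x, φ x ∂p.toMeasure = ∑ x, ρ x * φ x := by
    simp [p, PMF.integral_eq_sum, ENNReal.toReal_ofReal (hρ _)]
  set m := ∑ x, ρ x * f x
  have hoeffding : ∑ x, ρ x * exp (f x - m) ≤ exp ((b - a) ^ 2 / 8) := by
    have := (hasSubgaussianMGF_of_mem_Icc (μ := p.toMeasure)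
      (measurable_of_countable f).aemeasurable (ae_of_all _ hf)).mgf_le 1
    simp only [mgf, integral_eq, one_mul] at this
    convert this using 2
    simp only [div_pow, NNReal.coe_div, NNReal.coe_pow, coe_nnnorm, norm_eq_abs, sq_abs,
      NNReal.coe_ofNat, one_pow, mul_one]
    ring
  have hpos : 0 < ∑ x, ρ x * exp (f x - m) := by
    simpa [mgf, integral_eq] using
      mgf_pos (X := fun x => f x - m) (t := 1) (μ := p.toMeasure) Integrable.of_finite
  calc log (∑ x, ρ x * exp (f x)) = log (exp m * ∑ x, ρ x * exp (f x - m)) := by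
        congr 1; rw [mul_sum]; congr 1 with x; rw [exp_sub]; field_simp
    _ ≤ log (exp m * exp ((b - a) ^ 2 / 8)) := by gcongr
    _ = m + (b - a) ^ 2 / 8 := by rw [← exp_add, log_exp]

theorem mem_Icc_iInf_iSup {X : Type*} [Finite X] (f : X → ℝ) (x : X) :
    f x ∈ Set.Icc (⨅ y, f y) (⨆ y, f y) :=
  ⟨Finite.ciInf_le f x, Finite.le_ciSup f x⟩

section Gibbs

variable {X : Type*} [Fintype X] {μ : X → ℝ}

noncomputable def partitionFn (μ f : X → ℝ) : ℝ := ∑ x, μ x * exp (f x)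

theorem gibbs_apply (μ f : X → ℝ) (x : X) : gibbs μ f x = μ x * exp (f x) / partitionFn μ f :=
  rfl

theorem partitionFn_pos [Nonempty X] (hμ : ∀ x, 0 < μ x) (f : X → ℝ) : 0 < partitionFn μ f :=
  sum_pos (fun x _ => mul_pos (hμ x) (exp_pos _)) univ_nonempty

theorem gibbs_pos [Nonempty X] (hμ : ∀ x, 0 < μ x) (f : X → ℝ) (x : X) : 0 < gibbs μ f x :=
  div_pos (mul_pos (hμ x) (exp_pos _)) (partitionFn_pos hμ f)

theorem sum_gibbs [Nonempty X] (hμ : ∀ x, 0 < μ x) (f : X → ℝ) : ∑ x, gibbs μ f x = 1 := by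
  simp only [gibbs_apply, ← sum_div]
  exact div_self (partitionFn_pos hμ f).ne'

theorem sum_gibbs_mul_exp_sub (μ g h : X → ℝ) :
    ∑ x, gibbs μ g x * exp (h x - g x) = partitionFn μ h / partitionFn μ g := by
  simp only [gibbs_apply, partitionFn, sum_div, exp_sub]
  refine sum_congr rfl fun x _ => ?_
  field_simp

theorem log_gibbs_div_gibbs [Nonempty X] (hμ : ∀ x, 0 < μ x) (g h : X → ℝ) (x : X) :
    log (gibbs μ g x / gibbs μ h x) = g x - h x + log (partitionFn μ h / partitionFn μ g) := by
  have hZg := (partitionFn_pos hμ g).ne'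
  have hZh := (partitionFn_pos hμ h).ne'
  have : gibbs μ g x / gibbs μ h x = exp (g x - h x) * (partitionFn μ h / partitionFn μ g) := by
    rw [gibbs_apply, gibbs_apply, exp_sub]
    field_simp [(hμ x).ne']
  rw [this, log_mul (exp_pos _).ne' (div_ne_zero hZh hZg), log_exp]

theorem klDiv_gibbs_eq [Nonempty X] (hμ : ∀ x, 0 < μ x) (g h : X → ℝ) :
    klDiv (gibbs μ g) (gibbs μ h) =
      log (∑ x, gibbs μ g x * exp (h x - g x)) - ∑ x, gibbs μ g x * (h x - g x) := by
  simp only [klDiv, log_gibbs_div_gibbs hμ, sum_gibbs_mul_exp_sub, mul_add, sum_add_distrib,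
    ← sum_mul, sum_gibbs hμ, mul_sub, sum_sub_distrib]
  ring

end Gibbs

theorem klDiv_gibbs_le_general {X : Type*} [Fintype X] [Nonempty X]
    (μ : X → ℝ) (hpos : ∀ x, 0 < μ x) (g h : X → ℝ) :
    klDiv (gibbs μ g) (gibbs μ h) ≤ (spanSeminorm (fun x => g x - h x)) ^ 2 / 8 := by
  have hrange (x : X) : h x - g x ∈
      Set.Icc (-⨆ y, (g y - h y)) (-⨅ y, (g y - h y)) := by
    obtain ⟨hinf, hsup⟩ := mem_Icc_iInf_iSup (fun y => g y - h y) x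
    constructor <;> linarith
  have hoeffding := log_sum_mul_exp_le (fun x => (gibbs_pos hpos g x).le) (sum_gibbs hpos g) hrange
  rw [neg_sub_neg] at hoeffding
  rw [klDiv_gibbs_eq hpos, spanSeminorm]
  linarith

theorem klDiv_gibbs_le {X : Type*} [Fintype X] [Nonempty X]
    (μ : X → ℝ) (hpos : ∀ x, 0 < μ x) (hsum : ∑ x, μ x = 1) (g h : X → ℝ) :
    klDiv (gibbs μ g) (gibbs μ h) ≤ (spanSeminorm (fun x => g x - h x)) ^ 2 / 8 :=
  klDiv_gibbs_le_general μ hpos g h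
end

section
/- Let (X, ρ) be a Polish metric space and P a Markov kernel on X. If there exists κ ∈ (0,1] such that W₁(P(·|x), P(·|y)) ≤ (1−κ)ρ(x,y) for all x,y, then for all probability measures μ, ν on X, W₁(Pμ, Pν) ≤ (1−κ)W₁(μ,ν), where W₁ is the L¹ Wasserstein distance. -/
open Finset Real

/-- L¹ Wasserstein distance between distributions on a finite set, w.r.t. cost `d`. -/
noncomputable def W1 {X : Type*} [Fintype X] (d : X → X → ℝ) (μ ν : X → ℝ) : ℝ :=
  sInf { r | ∃ υ : X → X → ℝ, (∀ x y, 0 ≤ υ x y) ∧ (∀ x, ∑ y, υ x y = μ x) ∧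
    (∀ y, ∑ x, υ x y = ν y) ∧ r = ∑ x, ∑ y, υ x y * d x y }

/-- Action of a Markov kernel on a distribution. -/
noncomputable def kernelAct {X : Type*} [Fintype X] (P : X → X → ℝ) (μ : X → ℝ) : X → ℝ :=
  fun y => ∑ x, μ x * P x y

def IsProb {X : Type*} [Fintype X] (ν : X → ℝ) : Prop :=
  (∀ x, 0 ≤ ν x) ∧ ∑ x, ν x = 1

/-!
Couple `μ` and `ν` by any coupling `υ`, and each pair `P x`, `P y` by a near-optimal
coupling `ξ x y`. Gluing, `∑ x y, υ x y • ξ x y` couples `Pμ` and `Pν`, and its cost is the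
`υ`-average of the costs of the `ξ x y`, hence at most `(1 - κ) ∑ x y, υ x y ρ(x, y)` up to `ε`.
Taking the infimum over `υ` gives the contraction.
-/

namespace W1

variable {X : Type*} [Fintype X]

structure IsCoupling (μ ν : X → ℝ) (υ : X → X → ℝ) : Prop where
  nonneg : ∀ x y, 0 ≤ υ x y
  sum_snd : ∀ x, ∑ y, υ x y = μ x
  sum_fst : ∀ y, ∑ x, υ x y = ν y

def transportCost (d : X → X → ℝ) (υ : X → X → ℝ) : ℝ :=
  ∑ x, ∑ y, υ x y * d x y

theorem eq_sInf_transportCost (d : X → X → ℝ) (μ ν : X → ℝ) :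
    W1 d μ ν = sInf (transportCost d '' {υ | IsCoupling μ ν υ}) := by
  refine congrArg sInf (Set.ext fun r => ⟨?_, ?_⟩)
  · rintro ⟨υ, h0, h1, h2, rfl⟩
    exact ⟨υ, ⟨h0, h1, h2⟩, rfl⟩
  · rintro ⟨υ, ⟨h0, h1, h2⟩, rfl⟩
    exact ⟨υ, h0, h1, h2, rfl⟩

theorem isCoupling_prod {μ ν : X → ℝ} (hμ : IsProb μ) (hν : IsProb ν) :
    IsCoupling μ ν (fun x y => μ x * ν y) where
  nonneg x y := mul_nonneg (hμ.1 x) (hν.1 y)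
  sum_snd x := by rw [← mul_sum, hν.2, mul_one]
  sum_fst y := by rw [← sum_mul, hμ.2, one_mul]

theorem IsCoupling.sum_eq_one {μ ν : X → ℝ} {υ : X → X → ℝ} (hυ : IsCoupling μ ν υ)
    (hμ : IsProb μ) : ∑ x, ∑ y, υ x y = 1 := by
  simp only [hυ.sum_snd, hμ.2]

theorem transportCost_nonneg {d : X → X → ℝ} (hd : ∀ x y, 0 ≤ d x y) {μ ν : X → ℝ}
    {υ : X → X → ℝ} (hυ : IsCoupling μ ν υ) : 0 ≤ transportCost d υ :=
  sum_nonneg fun x _ => sum_nonneg fun y _ => mul_nonneg (hυ.nonneg x y) (hd x y)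

theorem le_transportCost {d : X → X → ℝ} (hd : ∀ x y, 0 ≤ d x y) {μ ν : X → ℝ}
    {υ : X → X → ℝ} (hυ : IsCoupling μ ν υ) : W1 d μ ν ≤ transportCost d υ := by
  rw [eq_sInf_transportCost]
  refine csInf_le ?_ ⟨υ, hυ, rfl⟩
  refine ⟨0, ?_⟩
  rintro _ ⟨υ', hυ', rfl⟩
  exact transportCost_nonneg hd hυ'

theorem exists_isCoupling_transportCost_le (d : X → X → ℝ) {μ ν : X → ℝ} (hμ : IsProb μ)
    (hν : IsProb ν) {ε : ℝ} (hε : 0 < ε) :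
    ∃ υ, IsCoupling μ ν υ ∧ transportCost d υ ≤ W1 d μ ν + ε := by
  rw [eq_sInf_transportCost]
  obtain ⟨_, ⟨υ, hυ, rfl⟩, hlt⟩ :=
    Real.lt_sInf_add_pos (Set.Nonempty.image _ ⟨_, isCoupling_prod hμ hν⟩) hε
  exact ⟨υ, hυ, hlt.le⟩

theorem le_mul_of_forall_isCoupling {d : X → X → ℝ} {μ ν : X → ℝ} (hμ : IsProb μ)
    (hν : IsProb ν) {a c : ℝ} (hc : 0 ≤ c)
    (h : ∀ υ, IsCoupling μ ν υ → a ≤ c * transportCost d υ) : a ≤ c * W1 d μ ν := by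
  rw [eq_sInf_transportCost, ← smul_eq_mul, ← Real.sInf_smul_of_nonneg hc]
  refine le_csInf ⟨_, _, ⟨_, isCoupling_prod hμ hν, rfl⟩, rfl⟩ ?_
  rintro _ ⟨_, ⟨υ, hυ, rfl⟩, rfl⟩
  exact h υ hυ

def glue (υ : X → X → ℝ) (ξ : X → X → X → X → ℝ) : X → X → ℝ :=
  fun a b => ∑ x, ∑ y, υ x y * ξ x y a b

theorem IsCoupling.glue {P Q : X → X → ℝ} {μ ν : X → ℝ} {υ : X → X → ℝ}
    {ξ : X → X → X → X → ℝ} (hυ : IsCoupling μ ν υ)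
    (hξ : ∀ x y, IsCoupling (P x) (Q y) (ξ x y)) :
    IsCoupling (kernelAct P μ) (kernelAct Q ν) (W1.glue υ ξ) where
  nonneg a b := sum_nonneg fun x _ => sum_nonneg fun y _ =>
    mul_nonneg (hυ.nonneg x y) ((hξ x y).nonneg a b)
  sum_snd a := by
    calc ∑ b, ∑ x, ∑ y, υ x y * ξ x y a b = ∑ x, ∑ y, υ x y * ∑ b, ξ x y a b := by
          simp only [mul_sum]; exact sum_comm_cycle.symm
      _ = ∑ x, μ x * P x a := by simp only [(hξ _ _).sum_snd, ← sum_mul, hυ.sum_snd]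
  sum_fst b := by
    calc ∑ a, ∑ x, ∑ y, υ x y * ξ x y a b = ∑ y, ∑ x, υ x y * ∑ a, ξ x y a b := by
          simp only [mul_sum]; exact sum_comm_cycle.symm.trans sum_comm
      _ = ∑ y, ν y * Q y b := by simp only [(hξ _ _).sum_fst, ← sum_mul, hυ.sum_fst]

theorem transportCost_glue (d : X → X → ℝ) (υ : X → X → ℝ) (ξ : X → X → X → X → ℝ) :
    transportCost d (glue υ ξ) = ∑ x, ∑ y, υ x y * transportCost d (ξ x y) := by
  simp only [transportCost, glue, sum_mul, mul_sum, mul_assoc]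
  exact (sum_congr rfl fun _ _ => sum_comm_cycle.symm).trans sum_comm_cycle.symm

theorem kernelAct_le_sum_mul {d : X → X → ℝ} (hd : ∀ x y, 0 ≤ d x y) {P Q : X → X → ℝ}
    (hP : ∀ x, IsProb (P x)) (hQ : ∀ y, IsProb (Q y)) {μ ν : X → ℝ} (hμ : IsProb μ)
    {υ : X → X → ℝ} (hυ : IsCoupling μ ν υ) :
    W1 d (kernelAct P μ) (kernelAct Q ν) ≤ ∑ x, ∑ y, υ x y * W1 d (P x) (Q y) := by
  refine le_of_forall_pos_le_add fun ε hε => ?_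
  choose ξ hξ hcost using fun x y => exists_isCoupling_transportCost_le d (hP x) (hQ y) hε
  calc W1 d (kernelAct P μ) (kernelAct Q ν)
      ≤ ∑ x, ∑ y, υ x y * transportCost d (ξ x y) := by
        rw [← transportCost_glue]; exact le_transportCost hd (hυ.glue hξ)
    _ ≤ ∑ x, ∑ y, υ x y * (W1 d (P x) (Q y) + ε) := by
        gcongr with x _ y _
        exacts [hυ.nonneg x y, hcost x y]
    _ = ∑ x, ∑ y, υ x y * W1 d (P x) (Q y) + ε := by
        simp only [mul_add, sum_add_distrib, ← sum_mul, hυ.sum_eq_one hμ, one_mul]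

end W1

open W1 in
theorem ricci_curvature_implies_wasserstein_contraction_general
    {X : Type*} [Fintype X] [MetricSpace X]
    (P : X → X → ℝ) (hP0 : ∀ x y, 0 ≤ P x y) (hP1 : ∀ x, ∑ y, P x y = 1)
    (κ : ℝ) (hκ1 : κ ≤ 1)
    (hRic : ∀ x y : X, W1 (fun a b => dist a b) (P x) (P y) ≤ (1 - κ) * dist x y) :
    ∀ μ ν : X → ℝ, IsProb μ → IsProb ν →
      W1 (fun a b => dist a b) (kernelAct P μ) (kernelAct P ν) ≤
        (1 - κ) * W1 (fun a b => dist a b) μ ν := by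
  intro μ ν hμ hν
  have hP : ∀ x, IsProb (P x) := fun x => ⟨hP0 x, hP1 x⟩
  refine le_mul_of_forall_isCoupling hμ hν (sub_nonneg.2 hκ1) fun υ hυ => ?_
  calc W1 (fun a b => dist a b) (kernelAct P μ) (kernelAct P ν)
      ≤ ∑ x, ∑ y, υ x y * W1 (fun a b => dist a b) (P x) (P y) :=
        kernelAct_le_sum_mul (fun _ _ => dist_nonneg) hP hP hμ hυ
    _ ≤ ∑ x, ∑ y, υ x y * ((1 - κ) * dist x y) := by
        gcongr with x _ y _
        exacts [hυ.nonneg x y, hRic x y]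
    _ = (1 - κ) * transportCost (fun a b => dist a b) υ := by
        simp only [transportCost, mul_sum, mul_left_comm]

/-- Ollivier's contraction property: positive Ricci curvature of a Markov kernel
implies Wasserstein contraction of its action on probability measures. -/
theorem ricci_curvature_implies_wasserstein_contraction
    {X : Type*} [Fintype X] [Nonempty X] [MetricSpace X]
    (P : X → X → ℝ) (hP0 : ∀ x y, 0 ≤ P x y) (hP1 : ∀ x, ∑ y, P x y = 1)
    (κ : ℝ) (hκ0 : 0 < κ) (hκ1 : κ ≤ 1)
    (hRic : ∀ x y : X, W1 (fun a b => dist a b) (P x) (P y) ≤ (1 - κ) * dist x y) :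
    ∀ μ ν : X → ℝ, IsProb μ → IsProb ν →
      W1 (fun a b => dist a b) (kernelAct P μ) (kernelAct P ν) ≤
        (1 - κ) * W1 (fun a b => dist a b) μ ν :=
  ricci_curvature_implies_wasserstein_contraction_general P hP0 hP1 κ hκ1 hRic
end
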